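/- Under the same setup, the variance of ‖Φx‖² equals 2Jσ⁴ Σ_{τ=-T}^{T} (T - |τ|) R_xx(τ)², where R_xx is the circular autocorrelation of x. -/

import Mathlib

open Finset Matrix

/-- Circular convolution of a signal `x : ZMod N → ℝ` with a filter `w : Fin T → ℝ`. -/
noncomputable def circConv {N T : ℕ} [NeZero N] (x : ZMod N → ℝ) (w : Fin T → ℝ) :
    ZMod N → ℝ :=
  fun n => ∑ k : Fin T, w k * x (n - (k : ℕ))

/-- Circular autocorrelation of `x : ZMod N → ℝ`. -/
noncomputable def circAutocorr {N : ℕ} [NeZero N] (x : ZMod N → ℝ) (t : ZMod N) : ℝ :=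
  ∑ k : ZMod N, x k * x (k - t)

/-- The matrix `Q_T(x)` with entries `Q_T(x)[n,t] = R_xx((t-n) mod N)`. -/
noncomputable def Qmat {N : ℕ} [NeZero N] (T : ℕ) (x : ZMod N → ℝ) :
    Matrix (Fin T) (Fin T) ℝ :=
  fun n t => circAutocorr x (((t : ℕ) : ZMod N) - ((n : ℕ) : ZMod N))
open MeasureTheory ProbabilityTheory
open scoped NNReal

/-- Energy of the output of the filterbank with filters `W j` applied to `x`:
`‖Φx‖² = Σ_j ‖x ∗ w_j‖²`. -/
noncomputable def fbEnergy {N T J : ℕ} [NeZero N] (x : ZMod N → ℝ)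
    (W : Fin J → Fin T → ℝ) : ℝ :=
  ∑ j : Fin J, ∑ n : ZMod N, (circConv x (W j) n) ^ 2

set_option linter.unusedSectionVars false
set_option linter.unnecessarySimpa false
set_option maxHeartbeats 1000000

open Real

namespace VFBAux

lemma integral_pi_prod {ι α : Type*} [Fintype ι] [MeasurableSpace α]
    (μ : ι → Measure α) [∀ i, SigmaFinite (μ i)] (f : ι → α → ℝ) :
    ∫ x : ι → α, ∏ i, f i (x i) ∂Measure.pi μ = ∏ i, ∫ x, f i x ∂μ i :=
  MeasureTheory.integral_fintype_prod_eq_prod (E := fun _ => α) f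

lemma integrable_pi_prod {ι α : Type*} [Fintype ι] [MeasurableSpace α]
    (μ : ι → Measure α) [∀ i, SigmaFinite (μ i)] (f : ι → α → ℝ)
    (hf : ∀ i, Integrable (f i) (μ i)) :
    Integrable (fun x : ι → α => ∏ i, f i (x i)) (Measure.pi μ) :=
  MeasureTheory.Integrable.fintype_prod_dep (E := fun _ => α) hf



lemma integrable_dirac' {f : ℝ → ℝ} (hf : Measurable f) (a : ℝ) :
    Integrable f (Measure.dirac a) := by
  refine ⟨hf.aestronglyMeasurable, ?_⟩
  rw [HasFiniteIntegral, lintegral_dirac]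
  exact ENNReal.coe_lt_top

variable (σ2 : ℝ≥0)

lemma pdf_eq (v : ℝ≥0) (x : ℝ) :
    gaussianPDFReal 0 v x = (√(2 * π * v))⁻¹ * rexp (-(2 * (v:ℝ))⁻¹ * x ^ 2) := by
  rw [gaussianPDFReal]
  congr 1
  rw [sub_zero]
  ring_nf

lemma gauss_int (n : ℕ) : Integrable (fun x : ℝ => x ^ n) (gaussianReal 0 σ2) := by
  by_cases hv : σ2 = 0
  · subst hv
    rw [gaussianReal_zero_var]
    exact integrable_dirac' (by measurability) 0
  · rw [gaussianReal_of_var_ne_zero _ hv]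
    have hσ : (0:ℝ) < (σ2:ℝ) := NNReal.coe_pos.mpr (pos_iff_ne_zero.mpr hv)
    have hb : (0:ℝ) < (2 * (σ2:ℝ))⁻¹ := by positivity
    have key : Integrable (fun x : ℝ => gaussianPDFReal 0 σ2 x * x ^ n) volume := by
      have h1 := (integrable_rpow_mul_exp_neg_mul_sq hb
        ((by norm_num : (-1:ℝ) < 0).trans_le (Nat.cast_nonneg n))).const_mul
        ((√(2 * π * σ2))⁻¹)
      refine h1.congr (Filter.Eventually.of_forall fun x => ?_)
      simp only [pdf_eq, Real.rpow_natCast]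
      ring
    have : (gaussianPDF 0 σ2) = fun x => ((gaussianPDFReal 0 σ2 x).toNNReal : ENNReal) := rfl
    rw [this, integrable_withDensity_iff_integrable_coe_smul
      (measurable_gaussianPDFReal 0 σ2).real_toNNReal]
    refine key.congr (Filter.Eventually.of_forall fun x => ?_)
    simp only [NNReal.smul_def, smul_eq_mul, Real.coe_toNNReal _ (gaussianPDFReal_nonneg 0 σ2 x)]

lemma gauss_eq_vol (hv : σ2 ≠ 0) (g : ℝ → ℝ) :
    ∫ x, g x ∂gaussianReal 0 σ2 = ∫ x, gaussianPDFReal 0 σ2 x * g x := by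
  rw [gaussianReal_of_var_ne_zero _ hv]
  have h : (gaussianPDF 0 σ2) = fun x => ((gaussianPDFReal 0 σ2 x).toNNReal : ENNReal) := rfl
  rw [h, integral_withDensity_eq_integral_smul (measurable_gaussianPDFReal 0 σ2).real_toNNReal]
  congr 1; funext x
  simp [NNReal.smul_def, Real.coe_toNNReal _ (gaussianPDFReal_nonneg 0 σ2 x)]

lemma gauss_mom_odd (n : ℕ) (hn : Odd n) : ∫ x, x ^ n ∂gaussianReal 0 σ2 = 0 := by
  by_cases hv : σ2 = 0
  · subst hv; rw [gaussianReal_zero_var, integral_dirac]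
    exact zero_pow hn.pos.ne'
  · rw [gauss_eq_vol σ2 hv]
    have h := integral_neg_eq_self (fun x => gaussianPDFReal 0 σ2 x * x ^ n) volume
    have h2 : ∀ x : ℝ, gaussianPDFReal 0 σ2 (-x) * (-x) ^ n
        = -(gaussianPDFReal 0 σ2 x * x ^ n) := by
      intro x
      rw [hn.neg_pow, pdf_eq, pdf_eq, neg_sq]
      ring
    simp only [h2, integral_neg] at h
    linarith

lemma gauss_mom_even (m : ℕ) (hv : σ2 ≠ 0) :
    ∫ x, x ^ (2*m) ∂gaussianReal 0 σ2 =
      (√(2 * π * σ2))⁻¹ * (((2*(σ2:ℝ))⁻¹) ^ (-((((2*m:ℕ)):ℝ) + 1) / ((2:ℕ):ℝ))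
        * Real.Gamma (((((2*m:ℕ)):ℝ) + 1) / ((2:ℕ):ℝ))) := by
  have hσ : (0:ℝ) < σ2 := NNReal.coe_pos.mpr (pos_iff_ne_zero.mpr hv)
  have hb : (0:ℝ) < (2*(σ2:ℝ))⁻¹ := by positivity
  rw [gauss_eq_vol σ2 hv]
  calc ∫ x, gaussianPDFReal 0 σ2 x * x^(2*m)
      = ∫ x, (fun t => gaussianPDFReal 0 σ2 t * t ^ (2*m)) |x| := by
        congr 1; funext x; simp only [pdf_eq, pow_mul, sq_abs]
    _ = 2 * ∫ t in Set.Ioi (0:ℝ), gaussianPDFReal 0 σ2 t * t ^ (2*m) :=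
        integral_comp_abs (f := fun t => gaussianPDFReal 0 σ2 t * t ^ (2*m))
    _ = 2 * ∫ t in Set.Ioi (0:ℝ), (√(2*π*σ2))⁻¹ *
          (t ^ ((((2*m:ℕ)):ℝ)) * rexp (-(2*(σ2:ℝ))⁻¹ * t ^ (((2:ℕ):ℝ)))) := by
        congr 1
        refine setIntegral_congr_fun measurableSet_Ioi (fun t ht => ?_)
        rw [pdf_eq, Real.rpow_natCast, Real.rpow_natCast]
        ring
    _ = _ := by
        rw [integral_const_mul, integral_rpow_mul_exp_neg_mul_rpow (by norm_num)
          ((by norm_num : (-1:ℝ) < 0).trans_le (Nat.cast_nonneg _)) hb]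
        push_cast
        ring

lemma gmom0 : ∫ x, x ^ 0 ∂gaussianReal 0 σ2 = 1 := by simp

lemma gmom1 : ∫ x, x ^ 1 ∂gaussianReal 0 σ2 = 0 := gauss_mom_odd σ2 1 odd_one

lemma gmom3 : ∫ x, x ^ 3 ∂gaussianReal 0 σ2 = 0 := gauss_mom_odd σ2 3 (by decide)

lemma gmom2 : ∫ x, x ^ 2 ∂gaussianReal 0 σ2 = (σ2:ℝ) := by
  by_cases hv : σ2 = 0
  · subst hv; rw [gaussianReal_zero_var, integral_dirac]; norm_num
  · have hσ : (0:ℝ) < σ2 := NNReal.coe_pos.mpr (pos_iff_ne_zero.mpr hv)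
    have h32 : Real.Gamma ((3:ℝ)/2) = (1/2) * √π := by
      rw [show (3:ℝ)/2 = 1/2 + 1 by norm_num, Real.Gamma_add_one (by norm_num),
        Real.Gamma_one_half_eq]
    have hpow : ((2*(σ2:ℝ))⁻¹) ^ (-(3:ℝ)/2) = (2*(σ2:ℝ)) * √(2*(σ2:ℝ)) := by
      rw [Real.inv_rpow (by positivity), ← Real.rpow_neg (by positivity), neg_div, neg_neg]
      rw [show (3:ℝ)/2 = 1 + 1/2 by norm_num, Real.rpow_add (by positivity),
        Real.rpow_one, ← Real.sqrt_eq_rpow]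
    have hsqrt : √(2*π*(σ2:ℝ)) = √π * √(2*(σ2:ℝ)) := by
      rw [show 2*π*(σ2:ℝ) = π*(2*(σ2:ℝ)) by ring, Real.sqrt_mul pi_pos.le]
    have e : (-((((2*1:ℕ)):ℝ) + 1) / ((2:ℕ):ℝ)) = -(3:ℝ)/2 := by push_cast; norm_num
    have e' : ((((2*1:ℕ)):ℝ) + 1) / ((2:ℕ):ℝ) = (3:ℝ)/2 := by push_cast; norm_num
    have hs2 : (0:ℝ) < √(2*(σ2:ℝ)) := Real.sqrt_pos.mpr (by positivity)
    have hsp : (0:ℝ) < √π := Real.sqrt_pos.mpr pi_pos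
    rw [show (2:ℕ) = 2*1 from rfl, gauss_mom_even σ2 1 hv, e, e', h32, hpow, hsqrt]
    field_simp

lemma gmom4 : ∫ x, x ^ 4 ∂gaussianReal 0 σ2 = 3 * (σ2:ℝ)^2 := by
  by_cases hv : σ2 = 0
  · subst hv; rw [gaussianReal_zero_var, integral_dirac]; norm_num
  · have hσ : (0:ℝ) < σ2 := NNReal.coe_pos.mpr (pos_iff_ne_zero.mpr hv)
    have h32 : Real.Gamma ((3:ℝ)/2) = (1/2) * √π := by
      rw [show (3:ℝ)/2 = 1/2 + 1 by norm_num, Real.Gamma_add_one (by norm_num),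
        Real.Gamma_one_half_eq]
    have h52 : Real.Gamma ((5:ℝ)/2) = (3/2) * ((1/2) * √π) := by
      rw [show (5:ℝ)/2 = 3/2 + 1 by norm_num, Real.Gamma_add_one (by norm_num), h32]
    have hsq : (2*(σ2:ℝ)) ^ ((2:ℝ)) = (2*(σ2:ℝ))^(2:ℕ) := by
      rw [show ((2:ℝ)) = ((2:ℕ):ℝ) by norm_num, Real.rpow_natCast]
    have hpow : ((2*(σ2:ℝ))⁻¹) ^ (-(5:ℝ)/2) = (2*(σ2:ℝ))^(2:ℕ) * √(2*(σ2:ℝ)) := by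
      rw [Real.inv_rpow (by positivity), ← Real.rpow_neg (by positivity), neg_div, neg_neg]
      rw [show (5:ℝ)/2 = 2 + 1/2 by norm_num, Real.rpow_add (by positivity),
        ← Real.sqrt_eq_rpow, hsq]
    have hsqrt : √(2*π*(σ2:ℝ)) = √π * √(2*(σ2:ℝ)) := by
      rw [show 2*π*(σ2:ℝ) = π*(2*(σ2:ℝ)) by ring, Real.sqrt_mul pi_pos.le]
    have e : (-((((2*2:ℕ)):ℝ) + 1) / ((2:ℕ):ℝ)) = -(5:ℝ)/2 := by push_cast; norm_num
    have e' : ((((2*2:ℕ)):ℝ) + 1) / ((2:ℕ):ℝ) = (5:ℝ)/2 := by push_cast; norm_num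
    have hs2 : (0:ℝ) < √(2*(σ2:ℝ)) := Real.sqrt_pos.mpr (by positivity)
    have hsp : (0:ℝ) < √π := Real.sqrt_pos.mpr pi_pos
    rw [show (4:ℕ) = 2*2 from rfl, gauss_mom_even σ2 2 hv, e, e', h52, hpow, hsqrt]
    field_simp


variable (σ2 : ℝ≥0)

noncomputable def gmom (n : ℕ) : ℝ := ∫ x, x ^ n ∂gaussianReal 0 σ2

lemma gmom0' : gmom σ2 0 = 1 := gmom0 σ2
lemma gmom1' : gmom σ2 1 = 0 := gmom1 σ2
lemma gmom2' : gmom σ2 2 = (σ2:ℝ) := gmom2 σ2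
lemma gmom3' : gmom σ2 3 = 0 := gmom3 σ2
lemma gmom4' : gmom σ2 4 = 3 * (σ2:ℝ)^2 := gmom4 σ2
lemma gauss_int' (n : ℕ) : Integrable (fun x : ℝ => x ^ n) (gaussianReal 0 σ2) :=
  gauss_int σ2 n


section Iota
variable {ι : Type*} [Fintype ι] [DecidableEq ι]

/-- indicator exponent -/
def dd (a i : ι) : ℕ := if a = i then 1 else 0

lemma prod_pow_dd (w : ι → ℝ) (a : ι) : ∏ i, (w i) ^ (dd a i) = w a := by
  have h : ∀ i ∈ Finset.univ, (w i) ^ (dd a i) = if a = i then w i else 1 := by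
    intro i _
    unfold dd; split_ifs <;> simp
  rw [Finset.prod_congr rfl h, Finset.prod_ite_eq]
  simp

lemma mono2 (w : ι → ℝ) (a b : ι) : w a * w b = ∏ i, (w i) ^ (dd a i + dd b i) := by
  simp only [pow_add, Finset.prod_mul_distrib, prod_pow_dd]

lemma mono4 (w : ι → ℝ) (a b c e : ι) :
    w a * w b * (w c * w e) = ∏ i, (w i) ^ (dd a i + dd b i + dd c i + dd e i) := by
  simp only [pow_add, Finset.prod_mul_distrib, prod_pow_dd]
  ring

lemma integral_mono (e : ι → ℕ) :
    ∫ w : ι → ℝ, ∏ i, (w i) ^ (e i) ∂(Measure.pi fun _ : ι => gaussianReal 0 σ2)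
      = ∏ i, gmom σ2 (e i) :=
  integral_pi_prod _ (fun i t => t ^ (e i))

lemma integrable_mono (e : ι → ℕ) :
    Integrable (fun w : ι → ℝ => ∏ i, (w i) ^ (e i))
      (Measure.pi fun _ : ι => gaussianReal 0 σ2) :=
  integrable_pi_prod _ (fun i t => t ^ (e i)) (fun i => gauss_int' σ2 (e i))

lemma integrable_m2 (a b : ι) :
    Integrable (fun w : ι → ℝ => w a * w b)
      (Measure.pi fun _ : ι => gaussianReal 0 σ2) := by
  have h : (fun w : ι → ℝ => w a * w b)
      = fun w => ∏ i, (w i) ^ (dd a i + dd b i) := funext fun w => mono2 w a b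
  rw [h]; exact integrable_mono σ2 _

lemma integrable_m4 (a b c e : ι) :
    Integrable (fun w : ι → ℝ => w a * w b * (w c * w e))
      (Measure.pi fun _ : ι => gaussianReal 0 σ2) := by
  have h : (fun w : ι → ℝ => w a * w b * (w c * w e))
      = fun w => ∏ i, (w i) ^ (dd a i + dd b i + dd c i + dd e i) :=
    funext fun w => mono4 w a b c e
  rw [h]; exact integrable_mono σ2 _

lemma I2 (a b : ι) :
    ∫ w : ι → ℝ, w a * w b ∂(Measure.pi fun _ : ι => gaussianReal 0 σ2)
      = (σ2:ℝ) * (if a = b then 1 else 0) := by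
  have h : (fun w : ι → ℝ => w a * w b)
      = fun w => ∏ i, (w i) ^ (dd a i + dd b i) := funext fun w => mono2 w a b
  rw [h, integral_mono]
  by_cases hab : a = b
  · subst hab
    have h2 : ∀ i ∈ Finset.univ, gmom σ2 (dd a i + dd a i)
        = if a = i then (σ2:ℝ) else 1 := by
      intro i _
      unfold dd; split_ifs
      · exact gmom2' σ2
      · exact gmom0' σ2
    rw [Finset.prod_congr rfl h2, Finset.prod_ite_eq]
    simp
  · rw [Finset.prod_eq_zero (Finset.mem_univ a)]
    · simp [hab]
    · unfold dd
      rw [if_pos rfl, if_neg (fun h' => hab h'.symm)]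
      exact gmom1' σ2

lemma I4 (a b c e : ι) :
    ∫ w : ι → ℝ, w a * w b * (w c * w e) ∂(Measure.pi fun _ : ι => gaussianReal 0 σ2)
      = (σ2:ℝ)^2 * ((if a = b then (1:ℝ) else 0) * (if c = e then (1:ℝ) else 0)
          + (if a = c then (1:ℝ) else 0) * (if b = e then (1:ℝ) else 0)
          + (if a = e then (1:ℝ) else 0) * (if b = c then (1:ℝ) else 0)) := by
  have h : (fun w : ι → ℝ => w a * w b * (w c * w e))
      = fun w => ∏ i, (w i) ^ (dd a i + dd b i + dd c i + dd e i) :=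
    funext fun w => mono4 w a b c e
  rw [h, integral_mono]
  by_cases hab : a = b
  · subst hab
    by_cases hce : c = e
    · subst hce
      by_cases hac : a = c
      · -- all four equal
        subst hac
        have h2 : ∀ i ∈ Finset.univ, gmom σ2 (dd a i + dd a i + dd a i + dd a i)
            = if a = i then 3 * (σ2:ℝ)^2 else 1 := by
          intro i _
          unfold dd; split_ifs
          · norm_num [gmom4' σ2]
          · norm_num [gmom0' σ2]
        rw [Finset.prod_congr rfl h2, Finset.prod_ite_eq]
        simp
        ring
      · -- pairs (a,a),(c,c), a ≠ c
        have h2 : ∀ i ∈ Finset.univ, gmom σ2 (dd a i + dd a i + dd c i + dd c i)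
            = (if a = i then (σ2:ℝ) else 1) * (if c = i then (σ2:ℝ) else 1) := by
          intro i _
          unfold dd; split_ifs with h1 h2
          · exact absurd (h1.trans h2.symm) hac
          · norm_num [gmom2' σ2]
          · norm_num [gmom2' σ2]
          · norm_num [gmom0' σ2]
        rw [Finset.prod_congr rfl h2, Finset.prod_mul_distrib, Finset.prod_ite_eq,
          Finset.prod_ite_eq]
        simp [hac]
        ring
    · -- a = b, c ≠ e : zero
      have hz : gmom σ2 (dd a c + dd a c + dd c c + dd e c) = 0 := by
        unfold dd
        rw [if_pos rfl, if_neg (fun h' : e = c => hce h'.symm)]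
        split_ifs
        · exact gmom3' σ2
        · exact gmom1' σ2
      rw [Finset.prod_eq_zero (Finset.mem_univ c) hz]
      by_cases hac : a = c <;> by_cases hae : a = e
      · exact absurd (hac.symm.trans hae) hce
      · simp [hce, hae]
      · simp [hce, hac]
      · simp [hce, hac, hae]
  · by_cases hce : c = e
    · -- a ≠ b, c = e : zero at a
      subst hce
      have hz : gmom σ2 (dd a a + dd b a + dd c a + dd c a) = 0 := by
        unfold dd
        rw [if_pos rfl, if_neg (fun h' : b = a => hab h'.symm)]
        split_ifs
        · exact gmom3' σ2
        · exact gmom1' σ2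
      rw [Finset.prod_eq_zero (Finset.mem_univ a) hz]
      by_cases hac : a = c <;> by_cases hbc : b = c
      · exact absurd (hac.trans hbc.symm) hab
      · simp [hab, hbc]
      · simp [hab, hac]
      · simp [hab, hac, hbc]
    · by_cases hac : a = c
      · by_cases hbe : b = e
        · -- pairs (a,b) = (c,e), a ≠ b
          subst hac; subst hbe
          have h2 : ∀ i ∈ Finset.univ, gmom σ2 (dd a i + dd b i + dd a i + dd b i)
              = (if a = i then (σ2:ℝ) else 1) * (if b = i then (σ2:ℝ) else 1) := by
            intro i _
            unfold dd; split_ifs with h1 h2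
            · exact absurd (h1.trans h2.symm) hab
            · norm_num [gmom2' σ2]
            · norm_num [gmom2' σ2]
            · norm_num [gmom0' σ2]
          rw [Finset.prod_congr rfl h2, Finset.prod_mul_distrib, Finset.prod_ite_eq,
            Finset.prod_ite_eq]
          simp [hab]
          ring
        · -- zero at b
          subst hac
          have hz : gmom σ2 (dd a b + dd b b + dd a b + dd e b) = 0 := by
            unfold dd
            rw [if_pos rfl, if_neg hab, if_neg (fun h' : e = b => hbe h'.symm)]
            exact gmom1' σ2
          rw [Finset.prod_eq_zero (Finset.mem_univ b) hz]
          simp [hab, hbe, Ne.symm hab]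
      · by_cases hae : a = e
        · by_cases hbc : b = c
          · -- pairs (a,b) = (e,c), a ≠ b
            subst hae; subst hbc
            have h2 : ∀ i ∈ Finset.univ, gmom σ2 (dd a i + dd b i + dd b i + dd a i)
                = (if a = i then (σ2:ℝ) else 1) * (if b = i then (σ2:ℝ) else 1) := by
              intro i _
              unfold dd; split_ifs with h1 h2
              · exact absurd (h1.trans h2.symm) hab
              · norm_num [gmom2' σ2]
              · norm_num [gmom2' σ2]
              · norm_num [gmom0' σ2]
            rw [Finset.prod_congr rfl h2, Finset.prod_mul_distrib, Finset.prod_ite_eq,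
              Finset.prod_ite_eq]
            simp [hab, Ne.symm hab]
            ring
          · -- zero at b
            subst hae
            have hz : gmom σ2 (dd a b + dd b b + dd c b + dd a b) = 0 := by
              unfold dd
              rw [if_pos rfl, if_neg hab, if_neg (fun h' : c = b => hbc h'.symm)]
              exact gmom1' σ2
            rw [Finset.prod_eq_zero (Finset.mem_univ b) hz]
            simp [hab, hac, hbc, Ne.symm hab]
        · -- zero at a
          have hz : gmom σ2 (dd a a + dd b a + dd c a + dd e a) = 0 := by
            unfold dd
            rw [if_pos rfl, if_neg (fun h' : b = a => hab h'.symm),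
              if_neg (fun h' : c = a => hac h'.symm), if_neg (fun h' : e = a => hae h'.symm)]
            exact gmom1' σ2
          rw [Finset.prod_eq_zero (Finset.mem_univ a) hz]
          simp [hab, hac, hae]

end Iota

section QF
variable (σ2 : ℝ≥0) {ι : Type*} [Fintype ι] [DecidableEq ι]

/-- quadratic form -/
def qf (A : ι → ι → ℝ) (u : ι → ℝ) : ℝ := ∑ q : ι × ι, A q.1 q.2 * (u q.1 * u q.2)

lemma qf_int (A : ι → ι → ℝ) :
    Integrable (qf A) (Measure.pi fun _ : ι => gaussianReal 0 σ2) := by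
  unfold qf
  exact integrable_finset_sum _ fun q _ => (integrable_m2 σ2 q.1 q.2).const_mul _

lemma qf_sq (A : ι → ι → ℝ) (u : ι → ℝ) :
    qf A u * qf A u = ∑ q : ι × ι, ∑ r : ι × ι,
      (A q.1 q.2 * A r.1 r.2) * (u q.1 * u q.2 * (u r.1 * u r.2)) := by
  unfold qf
  rw [Finset.sum_mul_sum]
  exact Finset.sum_congr rfl fun q _ => Finset.sum_congr rfl fun r _ => by ring

lemma qf_sq_int (A : ι → ι → ℝ) :
    Integrable (fun u => qf A u * qf A u) (Measure.pi fun _ : ι => gaussianReal 0 σ2) := by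
  have h : (fun u : ι → ℝ => qf A u * qf A u) = fun u => ∑ q : ι × ι, ∑ r : ι × ι,
      (A q.1 q.2 * A r.1 r.2) * (u q.1 * u q.2 * (u r.1 * u r.2)) := funext (qf_sq A)
  rw [h]
  exact integrable_finset_sum _ fun q _ => integrable_finset_sum _ fun r _ =>
    (integrable_m4 σ2 q.1 q.2 r.1 r.2).const_mul _

lemma qf_eq (A : ι → ι → ℝ) :
    ∫ u, qf A u ∂(Measure.pi fun _ : ι => gaussianReal 0 σ2)
      = ∑ q : ι × ι, A q.1 q.2 * ((σ2:ℝ) * (if q.1 = q.2 then 1 else 0)) := by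
  unfold qf
  rw [integral_finset_sum _ fun q _ => (integrable_m2 σ2 q.1 q.2).const_mul _]
  refine Finset.sum_congr rfl fun q _ => ?_
  rw [integral_const_mul, I2]

lemma qf_sq_eq (A : ι → ι → ℝ) :
    ∫ u, qf A u * qf A u ∂(Measure.pi fun _ : ι => gaussianReal 0 σ2)
      = (∑ q : ι × ι, A q.1 q.2 * ((σ2:ℝ) * (if q.1 = q.2 then 1 else 0)))^2
        + (σ2:ℝ)^2 * ∑ q : ι × ι,
            (A q.1 q.2 * A q.1 q.2 + A q.1 q.2 * A q.2 q.1) := by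
  have h : (fun u : ι → ℝ => qf A u * qf A u) = fun u => ∑ q : ι × ι, ∑ r : ι × ι,
      (A q.1 q.2 * A r.1 r.2) * (u q.1 * u q.2 * (u r.1 * u r.2)) := funext (qf_sq A)
  rw [h, integral_finset_sum _ fun q _ => integrable_finset_sum _ fun r _ =>
    (integrable_m4 σ2 q.1 q.2 r.1 r.2).const_mul _]
  have h2 : ∀ q : ι × ι, ∀ r : ι × ι, (∫ u, (A q.1 q.2 * A r.1 r.2)
        * (u q.1 * u q.2 * (u r.1 * u r.2))
        ∂(Measure.pi fun _ : ι => gaussianReal 0 σ2))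
      = (A q.1 q.2 * ((σ2:ℝ) * (if q.1 = q.2 then 1 else 0)))
          * (A r.1 r.2 * ((σ2:ℝ) * (if r.1 = r.2 then 1 else 0)))
        + (σ2:ℝ)^2 * (A q.1 q.2 * A r.1 r.2) *
          ((if q.1 = r.1 then (1:ℝ) else 0) * (if q.2 = r.2 then (1:ℝ) else 0)
          + (if q.1 = r.2 then (1:ℝ) else 0) * (if q.2 = r.1 then (1:ℝ) else 0)) := by
    intro q r
    rw [integral_const_mul, I4]
    ring
  have h3 : ∀ q : ι × ι, ∑ r : ι × ι, (σ2:ℝ)^2 * (A q.1 q.2 * A r.1 r.2) *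
        ((if q.1 = r.1 then (1:ℝ) else 0) * (if q.2 = r.2 then (1:ℝ) else 0)
        + (if q.1 = r.2 then (1:ℝ) else 0) * (if q.2 = r.1 then (1:ℝ) else 0))
      = (σ2:ℝ)^2 * (A q.1 q.2 * A q.1 q.2 + A q.1 q.2 * A q.2 q.1) := by
    rintro ⟨k, l⟩
    rw [Fintype.sum_prod_type]
    have e1 : ∀ k' : ι, (∑ l' : ι, (σ2:ℝ)^2 * (A k l * A k' l') *
          ((if k = k' then (1:ℝ) else 0) * (if l = l' then (1:ℝ) else 0)
          + (if k = l' then (1:ℝ) else 0) * (if l = k' then (1:ℝ) else 0)))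
        = (if k = k' then (σ2:ℝ)^2 * (A k l * A k' l) else 0)
          + (if l = k' then (σ2:ℝ)^2 * (A k l * A k' k) else 0) := by
      intro k'
      have e0 : ∀ l' : ι, (σ2:ℝ)^2 * (A k l * A k' l') *
            ((if k = k' then (1:ℝ) else 0) * (if l = l' then (1:ℝ) else 0)
            + (if k = l' then (1:ℝ) else 0) * (if l = k' then (1:ℝ) else 0))
          = (if l = l' then (if k = k' then (σ2:ℝ)^2 * (A k l * A k' l') else 0) else 0)
            + (if k = l' then (if l = k' then (σ2:ℝ)^2 * (A k l * A k' l') else 0) else 0) := by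
        intro l'; split_ifs <;> ring
      rw [Finset.sum_congr rfl fun l' _ => e0 l', Finset.sum_add_distrib,
        Finset.sum_ite_eq Finset.univ l, Finset.sum_ite_eq Finset.univ k]
      simp
    rw [Finset.sum_congr rfl fun k' _ => e1 k', Finset.sum_add_distrib,
      Finset.sum_ite_eq Finset.univ k, Finset.sum_ite_eq Finset.univ l]
    simp
    ring
  rw [Finset.sum_congr rfl fun q (_ : q ∈ Finset.univ) =>
    integral_finset_sum Finset.univ fun r _ => (integrable_m4 σ2 q.1 q.2 r.1 r.2).const_mul _]
  rw [Finset.sum_congr rfl fun q (_ : q ∈ Finset.univ) =>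
    Finset.sum_congr rfl fun r (_ : r ∈ Finset.univ) => h2 q r]
  rw [Finset.sum_congr rfl fun q (_ : q ∈ Finset.univ) => Finset.sum_add_distrib,
    Finset.sum_add_distrib]
  rw [Finset.sum_congr rfl fun q (_ : q ∈ Finset.univ) => h3 q]
  rw [← Finset.sum_mul_sum, ← Finset.mul_sum]
  ring


end QF

section MargCross
variable {κ : Type*} [Fintype κ] [DecidableEq κ] {α : Type*} [MeasurableSpace α]
  (μα : Measure α) [IsProbabilityMeasure μα]

lemma marg_repr (j : κ) (φ : α → ℝ) (w : κ → α) :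
    φ (w j) = ∏ j' : κ, (if j' = j then φ (w j') else 1) := by
  rw [Finset.prod_ite_eq' Finset.univ j (fun j' => φ (w j'))]
  simp

lemma marg_int (j : κ) (φ : α → ℝ) (hφ : Integrable φ μα) :
    Integrable (fun w : κ → α => φ (w j)) (Measure.pi fun _ : κ => μα) := by
  have h : (fun w : κ → α => φ (w j))
      = fun w => ∏ j' : κ, (if j' = j then φ (w j') else 1) := funext (marg_repr j φ)
  rw [h]
  exact integrable_pi_prod (fun _ : κ => μα) (fun j' u => if j' = j then φ u else 1)
    (fun j' => by split_ifs; exacts [hφ, integrable_const 1])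

lemma marg_eq (j : κ) (φ : α → ℝ) :
    ∫ w : κ → α, φ (w j) ∂(Measure.pi fun _ : κ => μα) = ∫ u, φ u ∂μα := by
  have h : (fun w : κ → α => φ (w j))
      = fun w => ∏ j' : κ, (if j' = j then φ (w j') else 1) := funext (marg_repr j φ)
  rw [h]
  refine (integral_pi_prod (fun _ : κ => μα)
    (fun j' u => if j' = j then φ u else 1)).trans ?_
  have h2 : ∀ j' : κ, ∫ u, (if j' = j then φ u else 1) ∂μα
      = if j' = j then ∫ u, φ u ∂μα else 1 := by
    intro j'; split_ifs
    · rfl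
    · simp
  simp only [h2]
  rw [Finset.prod_ite_eq' Finset.univ j (fun _ => ∫ u, φ u ∂μα)]
  simp

lemma cross_repr (j j' : κ) (φ ψ : α → ℝ) (w : κ → α) :
    φ (w j) * ψ (w j') = ∏ i : κ,
      ((if i = j then φ (w i) else 1) * (if i = j' then ψ (w i) else 1)) := by
  rw [Finset.prod_mul_distrib, Finset.prod_ite_eq' Finset.univ j (fun i => φ (w i)),
    Finset.prod_ite_eq' Finset.univ j' (fun i => ψ (w i))]
  simp

lemma cross_int (j j' : κ) (hjj : j ≠ j') (φ ψ : α → ℝ)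
    (hφ : Integrable φ μα) (hψ : Integrable ψ μα) :
    Integrable (fun w : κ → α => φ (w j) * ψ (w j')) (Measure.pi fun _ : κ => μα) := by
  have h : (fun w : κ → α => φ (w j) * ψ (w j')) = fun w => ∏ i : κ,
      ((if i = j then φ (w i) else 1) * (if i = j' then ψ (w i) else 1)) :=
    funext (cross_repr j j' φ ψ)
  rw [h]
  refine integrable_pi_prod (fun _ : κ => μα)
    (fun i u => (if i = j then φ u else 1) * (if i = j' then ψ u else 1)) (fun i => ?_)
  split_ifs with h1 h2
  · exact absurd (h1 ▸ h2) hjj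
  · simpa using hφ
  · simpa using hψ
  · simpa using integrable_const (1:ℝ)

lemma cross_eq (j j' : κ) (hjj : j ≠ j') (φ ψ : α → ℝ) :
    ∫ w : κ → α, φ (w j) * ψ (w j') ∂(Measure.pi fun _ : κ => μα)
      = (∫ u, φ u ∂μα) * ∫ u, ψ u ∂μα := by
  have h : (fun w : κ → α => φ (w j) * ψ (w j')) = fun w => ∏ i : κ,
      ((if i = j then φ (w i) else 1) * (if i = j' then ψ (w i) else 1)) :=
    funext (cross_repr j j' φ ψ)
  rw [h]
  refine (integral_pi_prod (fun _ : κ => μα)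
    (fun i u => (if i = j then φ u else 1) * (if i = j' then ψ u else 1))).trans ?_
  have h2 : ∀ i : κ, ∫ u, (if i = j then φ u else 1) * (if i = j' then ψ u else 1) ∂μα
      = (if i = j then ∫ u, φ u ∂μα else 1) * (if i = j' then ∫ u, ψ u ∂μα else 1) := by
    intro i
    split_ifs with h1 h2
    · exact absurd (h1 ▸ h2) hjj
    · simp
    · simp
    · simp
  simp only [h2]
  rw [Finset.prod_mul_distrib, Finset.prod_ite_eq' Finset.univ j (fun _ => ∫ u, φ u ∂μα),
    Finset.prod_ite_eq' Finset.univ j' (fun _ => ∫ u, ψ u ∂μα)]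
  simp


end MargCross

lemma count_one (T : ℕ) (c : ℤ) :
    (∑ l ∈ Finset.range T, if (l:ℤ) = c then (1:ℝ) else 0)
      = if 0 ≤ c ∧ c < (T:ℤ) then 1 else 0 := by
  by_cases hc : 0 ≤ c ∧ c < (T:ℤ)
  · rw [if_pos hc]
    have h1 : ∀ l ∈ Finset.range T,
        (if ((l:ℤ) = c) then (1:ℝ) else 0) = if l = c.toNat then (1:ℝ) else 0 :=
      fun l _ => if_congr (by omega) rfl rfl
    rw [Finset.sum_congr rfl h1, Finset.sum_ite_eq' (Finset.range T) c.toNat (fun _ => (1:ℝ)),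
      if_pos (Finset.mem_range.mpr (by omega))]
  · rw [if_neg hc, Finset.sum_eq_zero]
    intro l hl
    rw [if_neg]
    simp only [Finset.mem_range] at hl
    omega

lemma count_shift (T : ℕ) (τ : ℤ) (hτ1 : -(T:ℤ) ≤ τ) (hτ2 : τ ≤ T) :
    (∑ k ∈ Finset.range T, ∑ l ∈ Finset.range T, if (l:ℤ) - (k:ℤ) = τ then (1:ℝ) else 0)
      = (T:ℝ) - |(τ:ℝ)| := by
  have h1 : ∀ k ∈ Finset.range T,
      (∑ l ∈ Finset.range T, if (l:ℤ) - (k:ℤ) = τ then (1:ℝ) else 0)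
      = if 0 ≤ τ + k ∧ τ + k < (T:ℤ) then (1:ℝ) else 0 := by
    intro k _
    rw [← count_one T (τ + k)]
    exact Finset.sum_congr rfl fun l _ => if_congr (by omega) rfl rfl
  rw [Finset.sum_congr rfl h1]
  by_cases hτ : 0 ≤ τ
  · have h2 : ∀ k ∈ Finset.range T, (if 0 ≤ τ + k ∧ τ + k < (T:ℤ) then (1:ℝ) else 0)
        = if k ∈ Finset.range (T - τ.toNat) then (1:ℝ) else 0 :=
      fun k hk => if_congr (by simp only [Finset.mem_range]; omega) rfl rfl
    rw [Finset.sum_congr rfl h2, Finset.sum_ite_mem,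
      Finset.inter_eq_right.mpr (Finset.range_subset_range.mpr (by omega)),
      Finset.sum_const, Finset.card_range, nsmul_eq_mul, mul_one,
      abs_of_nonneg (by exact_mod_cast hτ : (0:ℝ) ≤ (τ:ℝ))]
    have hz : ((T - τ.toNat : ℕ):ℤ) = (T:ℤ) - τ := by omega
    exact_mod_cast congrArg (fun z : ℤ => (z:ℝ)) hz
  · have h2 : ∀ k ∈ Finset.range T, (if 0 ≤ τ + k ∧ τ + k < (T:ℤ) then (1:ℝ) else 0)
        = if k ∈ Finset.Ico ((-τ).toNat) T then (1:ℝ) else 0 := by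
      intro k hk
      simp only [Finset.mem_range] at hk
      exact if_congr (by simp only [Finset.mem_Ico]; omega) rfl rfl
    have hsub : Finset.Ico ((-τ).toNat) T ⊆ Finset.range T := by
      intro m hm
      simp only [Finset.mem_Ico] at hm
      exact Finset.mem_range.mpr hm.2
    rw [Finset.sum_congr rfl h2, Finset.sum_ite_mem,
      Finset.inter_eq_right.mpr hsub,
      Finset.sum_const, Nat.card_Ico, nsmul_eq_mul, mul_one,
      abs_of_nonpos (by exact_mod_cast le_of_not_ge hτ : (τ:ℝ) ≤ 0)]
    have hz : ((T - (-τ).toNat : ℕ):ℤ) = (T:ℤ) - -τ := by omega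
    exact_mod_cast congrArg (fun z : ℤ => (z:ℝ)) hz

lemma count_main (T : ℕ) (f : ℤ → ℝ) :
    (∑ k ∈ Finset.range T, ∑ l ∈ Finset.range T, f ((l:ℤ) - (k:ℤ)))
      = ∑ τ ∈ Finset.Icc (-(T:ℤ)) (T:ℤ), ((T:ℝ) - |(τ:ℝ)|) * f τ := by
  calc (∑ k ∈ Finset.range T, ∑ l ∈ Finset.range T, f ((l:ℤ) - (k:ℤ)))
      = ∑ k ∈ Finset.range T, ∑ l ∈ Finset.range T,
          ∑ τ ∈ Finset.Icc (-(T:ℤ)) (T:ℤ), if (l:ℤ) - (k:ℤ) = τ then f τ else 0 := by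
        refine Finset.sum_congr rfl fun k hk => Finset.sum_congr rfl fun l hl => ?_
        simp only [Finset.mem_range] at hk hl
        rw [Finset.sum_ite_eq (Finset.Icc (-(T:ℤ)) (T:ℤ)) ((l:ℤ) - (k:ℤ)) f,
          if_pos (Finset.mem_Icc.mpr (by omega))]
    _ = ∑ k ∈ Finset.range T, ∑ τ ∈ Finset.Icc (-(T:ℤ)) (T:ℤ), ∑ l ∈ Finset.range T,
          (if (l:ℤ) - (k:ℤ) = τ then f τ else 0) :=
        Finset.sum_congr rfl fun k _ => Finset.sum_comm
    _ = ∑ τ ∈ Finset.Icc (-(T:ℤ)) (T:ℤ), ∑ k ∈ Finset.range T, ∑ l ∈ Finset.range T,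
          (if (l:ℤ) - (k:ℤ) = τ then f τ else 0) := Finset.sum_comm
    _ = ∑ τ ∈ Finset.Icc (-(T:ℤ)) (T:ℤ), ((T:ℝ) - |(τ:ℝ)|) * f τ := by
        refine Finset.sum_congr rfl fun τ hτ => ?_
        simp only [Finset.mem_Icc] at hτ
        rw [← count_shift T τ hτ.1 hτ.2, Finset.sum_mul]
        refine Finset.sum_congr rfl fun k _ => ?_
        rw [Finset.sum_mul]
        refine Finset.sum_congr rfl fun l _ => ?_
        split_ifs <;> ring


section NX
variable {N : ℕ} [NeZero N] (x : ZMod N → ℝ)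

lemma autocorr_shift (k l : ZMod N) :
    ∑ n : ZMod N, x (n - k) * x (n - l) = circAutocorr x (l - k) := by
  unfold circAutocorr
  refine Fintype.sum_equiv (Equiv.subRight k) _ _ fun n => ?_
  simp only [Equiv.subRight_apply]
  have : n - k - (l - k) = n - l := by ring
  rw [this]

lemma autocorr_neg (t : ZMod N) : circAutocorr x (-t) = circAutocorr x t := by
  unfold circAutocorr
  refine Fintype.sum_equiv (Equiv.addRight t) _ _ fun k => ?_
  simp only [Equiv.coe_addRight]
  have h1 : k - -t = k + t := by ring
  have h2 : k + t - t = k := by ring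
  rw [h1, h2]
  ring

lemma sq_sum_eq_qf (T : ℕ) (u : Fin T → ℝ) :
    ∑ n : ZMod N, (∑ k : Fin T, u k * x (n - (k:ℕ)))^2
      = qf (fun k l : Fin T => ∑ n : ZMod N, x (n - ((k:ℕ):ZMod N)) * x (n - ((l:ℕ):ZMod N))) u := by
  unfold qf
  rw [Fintype.sum_prod_type]
  calc ∑ n : ZMod N, (∑ k : Fin T, u k * x (n - (k:ℕ)))^2
      = ∑ n : ZMod N, ∑ k : Fin T, ∑ l : Fin T,
          (u k * x (n - (k:ℕ))) * (u l * x (n - (l:ℕ))) := by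
        refine Finset.sum_congr rfl fun n _ => ?_
        rw [sq, Finset.sum_mul_sum]
    _ = ∑ k : Fin T, ∑ n : ZMod N, ∑ l : Fin T,
          (u k * x (n - (k:ℕ))) * (u l * x (n - (l:ℕ))) := Finset.sum_comm
    _ = ∑ k : Fin T, ∑ l : Fin T, ∑ n : ZMod N,
          (u k * x (n - (k:ℕ))) * (u l * x (n - (l:ℕ))) :=
        Finset.sum_congr rfl fun k _ => Finset.sum_comm
    _ = _ := by
        refine Finset.sum_congr rfl fun k _ => Finset.sum_congr rfl fun l _ => ?_
        rw [Finset.sum_mul]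
        exact Finset.sum_congr rfl fun n _ => by ring


end NX

end VFBAux

open VFBAux in
theorem variance_fbEnergy {N T J : ℕ} [NeZero N] (hT : T ≤ N)
    {Ω : Type*} [MeasureSpace Ω] [IsProbabilityMeasure (ℙ : Measure Ω)]
    (σ2 : ℝ≥0) (W : Ω → Fin J → Fin T → ℝ) (hW : Measurable W)
    (hlaw : Measure.map W ℙ =
      Measure.pi (fun _ : Fin J => Measure.pi (fun _ : Fin T => gaussianReal 0 σ2)))
    (x : ZMod N → ℝ) :
    Var[fun ω => fbEnergy x (W ω)] =
      2 * (J : ℝ) * (σ2 : ℝ) ^ 2 *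
        ∑ τ ∈ Finset.Icc (-(T : ℤ)) (T : ℤ),
          ((T : ℝ) - |(τ : ℝ)|) * (circAutocorr x ((τ : ZMod N))) ^ 2 := by
  classical
  set A : Fin T → Fin T → ℝ :=
    fun k l => ∑ n : ZMod N, x (n - ((k:ℕ):ZMod N)) * x (n - ((l:ℕ):ZMod N)) with hA
  set μT : Measure (Fin T → ℝ) := Measure.pi (fun _ : Fin T => gaussianReal 0 σ2) with hμT
  set μ : Measure (Fin J → Fin T → ℝ) := Measure.pi (fun _ : Fin J => μT) with hμ
  have hfb : ∀ w : Fin J → Fin T → ℝ, fbEnergy x w = ∑ j : Fin J, qf A (w j) := by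
    intro w
    unfold fbEnergy circConv
    exact Finset.sum_congr rfl fun j _ => sq_sum_eq_qf x T (w j)
  have hFmeas : Measurable (fbEnergy x : (Fin J → Fin T → ℝ) → ℝ) := by
    unfold fbEnergy circConv
    fun_prop
  -- integrability
  have hprod : ∀ j j' : Fin J,
      Integrable (fun w : Fin J → Fin T → ℝ => qf A (w j) * qf A (w j')) μ := by
    intro j j'
    by_cases hjj : j = j'
    · subst hjj
      exact marg_int μT j (fun u => qf A u * qf A u) (qf_sq_int σ2 A)
    · exact cross_int μT j j' hjj (qf A) (qf A) (qf_int σ2 A) (qf_int σ2 A)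
  have hF2int : Integrable (fun w => fbEnergy x w ^ 2) μ := by
    have hrepr : (fun w : Fin J → Fin T → ℝ => fbEnergy x w ^ 2)
        = fun w => ∑ j : Fin J, ∑ j' : Fin J, qf A (w j) * qf A (w j') := by
      funext w
      rw [hfb w, sq, Finset.sum_mul_sum]
    rw [hrepr]
    exact integrable_finset_sum _ fun j _ => integrable_finset_sum _ fun j' _ => hprod j j'
  -- expectations
  set E1 : ℝ := ∫ u, qf A u ∂μT with hE1
  set Q2 : ℝ := ∫ u, qf A u * qf A u ∂μT with hQ2
  have hEF : ∫ w, fbEnergy x w ∂μ = (J:ℝ) * E1 := by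
    simp only [hfb]
    rw [integral_finset_sum _ fun j _ => marg_int μT j (qf A) (qf_int σ2 A)]
    rw [Finset.sum_congr rfl fun j (_ : j ∈ Finset.univ) => marg_eq μT j (qf A)]
    rw [Finset.sum_const, Finset.card_univ, Fintype.card_fin, nsmul_eq_mul]
  have hEF2 : ∫ w, fbEnergy x w ^ 2 ∂μ
      = (J:ℝ) * ((J:ℝ) * (E1 * E1) + (Q2 - E1 * E1)) := by
    have hrepr : (fun w : Fin J → Fin T → ℝ => fbEnergy x w ^ 2)
        = fun w => ∑ j : Fin J, ∑ j' : Fin J, qf A (w j) * qf A (w j') := by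
      funext w
      rw [hfb w, sq, Finset.sum_mul_sum]
    rw [show (∫ w, fbEnergy x w ^ 2 ∂μ)
        = ∫ w, ∑ j : Fin J, ∑ j' : Fin J, qf A (w j) * qf A (w j') ∂μ by rw [← hrepr]]
    rw [integral_finset_sum _ fun j _ => integrable_finset_sum _ fun j' _ => hprod j j']
    rw [Finset.sum_congr rfl fun j (_ : j ∈ Finset.univ) =>
      integral_finset_sum _ fun j' _ => hprod j j']
    have hval : ∀ j j' : Fin J, ∫ w, qf A (w j) * qf A (w j') ∂μ
        = if j = j' then Q2 else E1 * E1 := by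
      intro j j'
      by_cases hjj : j = j'
      · subst hjj
        rw [if_pos rfl, hQ2]
        exact marg_eq μT j (fun u => qf A u * qf A u)
      · rw [if_neg hjj, hE1]
        exact cross_eq μT j j' hjj (qf A) (qf A)
    have hsum : ∀ j : Fin J, (∑ j' : Fin J, ∫ w, qf A (w j) * qf A (w j') ∂μ)
        = (J:ℝ) * (E1 * E1) + (Q2 - E1 * E1) := by
      intro j
      rw [Finset.sum_congr rfl fun j' (_ : j' ∈ Finset.univ) => hval j j']
      have hpt : ∀ j' : Fin J, (if j = j' then Q2 else E1 * E1)
          = E1 * E1 + (if j = j' then Q2 - E1 * E1 else 0) := by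
        intro j'; split_ifs <;> ring
      rw [Finset.sum_congr rfl fun j' (_ : j' ∈ Finset.univ) => hpt j',
        Finset.sum_add_distrib, Finset.sum_const, Finset.card_univ, Fintype.card_fin,
        Finset.sum_ite_eq Finset.univ j (fun _ => Q2 - E1 * E1), if_pos (Finset.mem_univ j),
        nsmul_eq_mul]
    rw [Finset.sum_congr rfl fun j (_ : j ∈ Finset.univ) => hsum j,
      Finset.sum_const, Finset.card_univ, Fintype.card_fin, nsmul_eq_mul]
  -- variance
  have hlaw' : Measure.map W ℙ = μ := hlaw
  have hMem : MemLp (fun ω => fbEnergy x (W ω)) 2 ℙ := by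
    have h1 : AEStronglyMeasurable (fbEnergy x) (Measure.map W ℙ) :=
      hFmeas.aestronglyMeasurable
    have h2 : MemLp (fbEnergy x) 2 (Measure.map W ℙ) := by
      rw [hlaw']
      exact (memLp_two_iff_integrable_sq hFmeas.aestronglyMeasurable).mpr hF2int
    exact (memLp_map_measure_iff h1 hW.aemeasurable).mp h2
  rw [variance_eq_sub hMem]
  simp only [Pi.pow_apply]
  have hi1 : ∫ ω, fbEnergy x (W ω) ∂ℙ = (J:ℝ) * E1 := by
    rw [← integral_map hW.aemeasurable hFmeas.aestronglyMeasurable, hlaw', hEF]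
  have hi2 : ∫ ω, fbEnergy x (W ω) ^ 2 ∂ℙ
      = (J:ℝ) * ((J:ℝ) * (E1 * E1) + (Q2 - E1 * E1)) := by
    rw [← integral_map (f := fun w => fbEnergy x w ^ 2) hW.aemeasurable
      (hFmeas.pow_const 2).aestronglyMeasurable, hlaw', hEF2]
  rw [hi1, hi2]
  -- now pure algebra + the Isserlis values
  have hQ2v : Q2 = E1 ^ 2 + (σ2:ℝ)^2 * ∑ q : Fin T × Fin T,
      (A q.1 q.2 * A q.1 q.2 + A q.1 q.2 * A q.2 q.1) := by
    rw [hQ2, hμT, qf_sq_eq σ2 A, hE1, hμT, qf_eq σ2 A]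
  have hfinal : ∑ q : Fin T × Fin T, (A q.1 q.2 * A q.1 q.2 + A q.1 q.2 * A q.2 q.1)
      = 2 * ∑ τ ∈ Finset.Icc (-(T : ℤ)) (T : ℤ),
          ((T : ℝ) - |(τ : ℝ)|) * (circAutocorr x ((τ : ZMod N))) ^ 2 := by
    rw [Fintype.sum_prod_type]
    have hAR : ∀ k l : Fin T, A k l
        = circAutocorr x (((l:ℕ):ZMod N) - ((k:ℕ):ZMod N)) := by
      intro k l
      rw [hA]
      exact autocorr_shift x _ _
    have hpt : ∀ k l : Fin T, A k l * A k l + A k l * A l k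
        = 2 * (circAutocorr x (((((l:ℕ):ℤ) - ((k:ℕ):ℤ)) : ℤ) : ZMod N))^2 := by
      intro k l
      have h1 : A l k = A k l := by
        rw [hAR, hAR, ← autocorr_neg x (((l:ℕ):ZMod N) - ((k:ℕ):ZMod N)), neg_sub]
      have h2 : (((((l:ℕ):ℤ) - ((k:ℕ):ℤ)) : ℤ) : ZMod N)
          = ((l:ℕ):ZMod N) - ((k:ℕ):ZMod N) := by push_cast; ring
      rw [h1, hAR, h2, sq]
      ring
    rw [Finset.sum_congr rfl fun k (_ : k ∈ Finset.univ) =>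
      Finset.sum_congr rfl fun l (_ : l ∈ Finset.univ) => hpt k l]
    have hfin1 : ∀ k : Fin T, (∑ l : Fin T,
        2 * (circAutocorr x (((((l:ℕ):ℤ) - ((k:ℕ):ℤ)) : ℤ) : ZMod N))^2)
        = ∑ l ∈ Finset.range T,
        2 * (circAutocorr x ((((l:ℤ) - ((k:ℕ):ℤ)) : ℤ) : ZMod N))^2 := by
      intro k
      exact Fin.sum_univ_eq_sum_range
        (fun m => 2 * (circAutocorr x ((((m:ℤ) - ((k:ℕ):ℤ)) : ℤ) : ZMod N))^2) T
    rw [Finset.sum_congr rfl fun k (_ : k ∈ Finset.univ) => hfin1 k]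
    rw [Fin.sum_univ_eq_sum_range
      (fun m => ∑ l ∈ Finset.range T,
        2 * (circAutocorr x ((((l:ℤ) - ((m:ℤ)) : ℤ)) : ZMod N))^2) T]
    rw [show (∑ k ∈ Finset.range T, ∑ l ∈ Finset.range T,
        2 * (circAutocorr x ((((l:ℤ) - (k:ℤ)) : ℤ) : ZMod N))^2)
      = ∑ τ ∈ Finset.Icc (-(T : ℤ)) (T : ℤ), ((T : ℝ) - |(τ : ℝ)|) *
        (2 * (circAutocorr x ((τ : ZMod N)))^2) from
      count_main T (fun τ => 2 * (circAutocorr x ((τ : ZMod N)))^2)]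
    rw [Finset.mul_sum]
    exact Finset.sum_congr rfl fun τ _ => by ring
  rw [hQ2v, hfinal]
  ring
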